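/- arXiv:1505.06724 — 5 statements merged into one kernel-verified Lean document; each statement's English description precedes it below -/
import Mathlib

section
/- For every formal power series φ̂(x) = Σ_{n≥0} φ_n x^n / Γ(1+sn) with coefficients in a Banach space, every integer k ≥ 1 and every real s > 0, the k-fold application of the Γ_s-moment integration operator satisfies the integral formula (∂^{-1}_{Γ_s,x})^k φ̂(x) = - ∫_0^{x^{1/s}} φ̂(y^s) ∂_y [(x^{1/s} - y)^{ks} / Γ(1+ks)] dy, interpreted coefficientwise (i.e., applying the formula to each monomial x^n yields x^{n+k} Γ(1+sn)/Γ(1+s(n+k)) times the original coefficient). -/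
/-!
On `(0, X)` with `X = x ^ (1/s)` the kernel `∂_y (X - y) ^ (ks) / Γ(1 + ks)` equals
`-(X - y) ^ (ks - 1) / Γ(ks)`, so the integral is a scaled beta integral
`B(1 + sn, ks) X ^ (sn + ks) / Γ(ks) = Γ(1 + sn) / Γ(1 + s(n + k)) · x ^ (n + k)`.
-/

open intervalIntegral

lemma Complex.integral_cpow_mul_sub_cpow {a b : ℂ} (ha : 0 < a.re) (hb : 0 < b.re)
    (hGamma : Complex.Gamma (a + b) ≠ 0) {X : ℝ} (hX : 0 < X) :
    ∫ y in (0:ℝ)..X, (y : ℂ) ^ (a - 1) * ((X : ℂ) - y) ^ (b - 1)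
      = Complex.Gamma a * Complex.Gamma b / Complex.Gamma (a + b) * (X : ℂ) ^ (a + b - 1) := by
  rw [Complex.betaIntegral_scaled a b hX, Complex.Gamma_mul_Gamma_eq_betaIntegral ha hb,
    mul_div_cancel_left₀ _ hGamma, mul_comm]

lemma Real.integral_rpow_mul_sub_rpow {a b X : ℝ} (ha : 0 < a) (hb : 0 < b) (hX : 0 < X) :
    ∫ y in (0:ℝ)..X, y ^ (a - 1) * (X - y) ^ (b - 1)
      = Real.Gamma a * Real.Gamma b / Real.Gamma (a + b) * X ^ (a + b - 1) := by
  have hGamma : Complex.Gamma ((a + b : ℝ) : ℂ) ≠ 0 := by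
    rw [Complex.Gamma_ofReal]
    exact_mod_cast (Real.Gamma_pos_of_pos (add_pos ha hb)).ne'
  have hcomplex := Complex.integral_cpow_mul_sub_cpow (a := a) (b := b) (by simpa using ha)
    (by simpa using hb) (by exact_mod_cast hGamma) hX
  apply Complex.ofReal_injective
  rw [← integral_ofReal]
  push_cast [← Complex.Gamma_ofReal, Complex.ofReal_cpow hX.le]
  rw [← hcomplex]
  refine integral_congr fun y hy => ?_
  rw [Set.uIcc_of_le hX.le] at hy
  push_cast [Complex.ofReal_cpow hy.1, Complex.ofReal_cpow (sub_nonneg.mpr hy.2)]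
  rfl

lemma hasDerivAt_sub_rpow_div_Gamma {c X y : ℝ} (hc : c ≠ 0) (hy : y < X) :
    HasDerivAt (fun y => (X - y) ^ c / Real.Gamma (1 + c))
      (-((X - y) ^ (c - 1) / Real.Gamma c)) y := by
  have hpow := ((hasDerivAt_id' y).const_sub X).rpow_const (p := c) (Or.inl (sub_pos.mpr hy).ne')
  refine (hpow.div_const (Real.Gamma (1 + c))).congr_deriv ?_
  rw [add_comm, Real.Gamma_add_one hc]
  field_simp

/-- The `k`-fold `Γ_s`-moment integration of the monomial `x ^ n` satisfies the
integral formula coefficientwise: applying the integral formula of the paper to the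
monomial `x ^ n` yields `Γ(1+sn)/Γ(1+s(n+k)) · x^(n+k)`. -/
theorem moment_integration_formula (s : ℝ) (hs : 0 < s) (k : ℕ) (hk : 1 ≤ k) (n : ℕ)
    (x : ℝ) (hx : 0 < x) :
    -∫ y in (0:ℝ)..(x ^ (1/s)), (y ^ s) ^ n *
        deriv (fun y : ℝ => (x ^ (1/s) - y) ^ ((k : ℝ) * s) / Real.Gamma (1 + k * s)) y
      = Real.Gamma (1 + s * n) / Real.Gamma (1 + s * (n + k)) * x ^ (n + k) := by
  set X := x ^ (1/s)
  set c := (k : ℝ) * s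
  have hc : 0 < c := mul_pos (by exact_mod_cast hk) hs
  have hX : 0 < X := Real.rpow_pos_of_pos hx _
  have hintegrand : Set.EqOn
      (fun y => (y ^ s) ^ n * deriv (fun y => (X - y) ^ c / Real.Gamma (1 + c)) y)
      (fun y => -(Real.Gamma c)⁻¹ * (y ^ (s * n + 1 - 1) * (X - y) ^ (c - 1)))
      (Set.Ioo 0 X) := fun y hy => by
    dsimp only
    rw [(hasDerivAt_sub_rpow_div_Gamma hc.ne' hy.2).deriv, ← Real.rpow_natCast,
      ← Real.rpow_mul hy.1.le, add_sub_cancel_right]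
    ring
  have hexponent : X ^ (s * n + 1 + c - 1) = x ^ (n + k) := by
    rw [← Real.rpow_natCast, ← Real.rpow_mul hx.le]
    congr 1
    field_simp
    push_cast
    ring
  rw [integral_congr_Ioo_of_le hX.le hintegrand,
    integral_const_mul,
    Real.integral_rpow_mul_sub_rpow (by positivity) hc hX, hexponent,
    show s * n + 1 + c = 1 + s * (n + k) by ring, add_comm (s * n)]
  have hGamma_c := (Real.Gamma_pos_of_pos hc).ne'
  field_simp
end

section
/- For s > 0 and an integer β ≥ 1, the entire function e_{s,β}(x) = Σ_{j≥β} C(j-1, β-1) x^j / Γ(1+sj) is of exponential growth of order at most 1/s: there exist constants A, B > 0 such that |e_{s,β}(x)| ≤ A·e^{B|x|^{1/s}} for all x ∈ ℂ. -/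
lemma myGamma_two : Real.Gamma 2 = 1 := by
  rw [(by norm_num : (2:ℝ) = 1 + 1), Real.Gamma_add_one one_ne_zero, Real.Gamma_one]; norm_num

lemma one_le_Gamma_of_two_le {t : ℝ} (ht : 2 ≤ t) : 1 ≤ Real.Gamma t := by
  rcases eq_or_lt_of_le ht with h | h
  · rw [← h, myGamma_two]
  · have ht1 : (0:ℝ) < t - 1 := by linarith
    have hb : (0:ℝ) < 1/(t-1) := by positivity
    have ha : (0:ℝ) ≤ (t-2)/(t-1) := div_nonneg (by linarith) (by linarith)
    have hab : (t-2)/(t-1) + 1/(t-1) = 1 := by field_simp; ring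
    have key := Real.convexOn_Gamma.2 (Set.mem_Ioi.mpr one_pos)
      (Set.mem_Ioi.mpr (by linarith : (0:ℝ) < t)) ha hb.le hab
    have hx : (t-2)/(t-1) * 1 + (1/(t-1)) * t = 2 := by field_simp; ring
    simp only [smul_eq_mul] at key
    rw [hx, myGamma_two, Real.Gamma_one] at key
    have hbt : 1 / (t - 1) * Real.Gamma t ≥ 1 / (t - 1) := by nlinarith [key]
    exact le_of_mul_le_mul_left (by simpa using hbt) hb

lemma half_factorial_le_Gamma_aux (n : ℕ) : ∀ θ : ℝ, 0 ≤ θ → θ ≤ 1 →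
    (Nat.factorial n : ℝ)/2 ≤ Real.Gamma (1 + n + θ) := by
  induction n with
  | zero =>
    intro θ h0 h1
    have key : 1 ≤ Real.Gamma (2 + θ) := one_le_Gamma_of_two_le (by linarith)
    have hne : (1 + θ : ℝ) ≠ 0 := by positivity
    have hrec : Real.Gamma ((1 + θ) + 1) = (1 + θ) * Real.Gamma (1 + θ) :=
      Real.Gamma_add_one hne
    have h2 : (2 + θ : ℝ) = (1 + θ) + 1 := by ring
    rw [h2, hrec] at key
    have hpos : 0 < Real.Gamma (1 + θ) := Real.Gamma_pos_of_pos (by positivity)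
    have harg : (1 + (0:ℕ) + θ : ℝ) = 1 + θ := by norm_num
    rw [harg]
    simp only [Nat.factorial_zero, Nat.cast_one]
    nlinarith
  | succ n ih =>
    intro θ h0 h1
    have hne : (1 + n + θ : ℝ) ≠ 0 := by positivity
    have hrec : Real.Gamma ((1 + n + θ) + 1) = (1 + n + θ) * Real.Gamma (1 + n + θ) :=
      Real.Gamma_add_one hne
    have harg : (1 + ((n+1 : ℕ) : ℝ) + θ : ℝ) = (1 + n + θ) + 1 := by push_cast; ring
    rw [harg, hrec]
    have ihθ := ih θ h0 h1
    have hfac : (Nat.factorial (n+1) : ℝ) = (n+1) * Nat.factorial n := by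
      rw [Nat.factorial_succ]; push_cast; ring
    rw [hfac]
    have hgp : 0 < Real.Gamma (1 + n + θ) := Real.Gamma_pos_of_pos (by positivity)
    nlinarith [ihθ, hgp, h0, Nat.cast_nonneg (α := ℝ) (Nat.factorial n)]

lemma half_factorial_le_Gamma {y : ℝ} (hy : 0 ≤ y) :
    ((Nat.factorial ⌊y⌋₊ : ℕ) : ℝ)/2 ≤ Real.Gamma (1 + y) := by
  have h1 : (⌊y⌋₊ : ℝ) ≤ y := Nat.floor_le hy
  have h2 : y < ⌊y⌋₊ + 1 := Nat.lt_floor_add_one y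
  have := half_factorial_le_Gamma_aux ⌊y⌋₊ (y - ⌊y⌋₊) (by linarith) (by linarith)
  have harg : (1 + (⌊y⌋₊:ℝ) + (y - ⌊y⌋₊) : ℝ) = 1 + y := by ring
  rwa [harg] at this

lemma choose_le_two_pow' (m k : ℕ) : m.choose k ≤ 2 ^ m := by
  rcases le_or_gt k m with h | h
  · calc m.choose k ≤ ∑ i ∈ Finset.range (m+1), m.choose i :=
        Finset.single_le_sum (fun i _ => Nat.zero_le _)
          (Finset.mem_range.mpr (Nat.lt_succ_of_le h))
    _ = 2 ^ m := Nat.sum_range_choose m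
  · rw [Nat.choose_eq_zero_of_lt h]; exact Nat.zero_le _

lemma pow_div_factorial_le_exp' {u : ℝ} (hu : 0 ≤ u) (n : ℕ) :
    u ^ n / Nat.factorial n ≤ Real.exp u := by
  have h := Real.sum_le_exp_of_nonneg hu (n+1)
  refine le_trans ?_ h
  exact Finset.single_le_sum (f := fun i => u ^ i / (Nat.factorial i : ℝ))
    (fun i _ => by positivity) (Finset.self_mem_range_succ n)

lemma tail_pow_bound {u : ℝ} (hu : 0 ≤ u) {N : ℕ} (hN : 2*u ≤ N) :
    ∀ n, N ≤ n → u ^ n / Nat.factorial n * 2 ^ n ≤ Real.exp u * 2 ^ N := by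
  intro n hn
  induction n, hn using Nat.le_induction with
  | base =>
    exact mul_le_mul_of_nonneg_right (pow_div_factorial_le_exp' hu N) (by positivity)
  | succ n hn ih =>
    have hfac : (Nat.factorial (n+1) : ℝ) = (n+1) * Nat.factorial n := by
      rw [Nat.factorial_succ]; push_cast; ring
    have hfp : (0:ℝ) < Nat.factorial n := by positivity
    have hn1 : (0:ℝ) < (n:ℝ) + 1 := by positivity
    have heq : u ^ (n+1) / Nat.factorial (n+1) * 2 ^ (n+1)
        = (u ^ n / Nat.factorial n * 2 ^ n) * (2*u/((n:ℝ)+1)) := by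
      rw [hfac]; field_simp; ring
    have hfrac : 2*u/((n:ℝ)+1) ≤ 1 := by
      rw [div_le_one hn1]
      have : (N:ℝ) ≤ (n:ℝ) := by exact_mod_cast hn
      linarith
    have hnn : (0:ℝ) ≤ u ^ n / Nat.factorial n * 2 ^ n := by positivity
    calc u ^ (n+1) / Nat.factorial (n+1) * 2 ^ (n+1)
        = (u ^ n / Nat.factorial n * 2 ^ n) * (2*u/((n:ℝ)+1)) := heq
      _ ≤ (u ^ n / Nat.factorial n * 2 ^ n) * 1 := mul_le_mul_of_nonneg_left hfrac hnn
      _ = u ^ n / Nat.factorial n * 2 ^ n := by ring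
      _ ≤ Real.exp u * 2 ^ N := ih

lemma term_real_bound {s u r : ℝ} (hs : 0 < s) (hu1 : 1 ≤ u) (hr : 0 ≤ r)
    (hur : 2*r ≤ u ^ s) (j : ℕ) :
    (2:ℝ)^j * r^j / Real.Gamma (1 + s*(j:ℝ)) ≤
      2*u*(u ^ (⌊s*(j:ℝ)⌋₊) / Nat.factorial ⌊s*(j:ℝ)⌋₊) := by
  set n := ⌊s*(j:ℝ)⌋₊ with hn
  have hy : 0 ≤ s*(j:ℝ) := by positivity
  have hG := half_factorial_le_Gamma hy
  have hGpos : 0 < Real.Gamma (1+s*(j:ℝ)) := Real.Gamma_pos_of_pos (by positivity)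
  have hu0 : 0 < u := lt_of_lt_of_le one_pos hu1
  have h2 : (2*r)^j ≤ (u ^ s)^j := pow_le_pow_left₀ (by positivity) hur j
  have h3 : (u ^ s)^j = u ^ (s*(j:ℝ)) := by
    rw [← Real.rpow_natCast (u ^ s) j, ← Real.rpow_mul hu0.le]
  have h4 : u ^ (s*(j:ℝ)) ≤ u ^ ((n:ℝ)+1) :=
    Real.rpow_le_rpow_of_exponent_le hu1 (le_of_lt (Nat.lt_floor_add_one _))
  have h5 : u ^ ((n:ℝ)+1) = u ^ (n+1 : ℕ) := by
    rw [← Real.rpow_natCast u (n+1)]; push_cast; ring_nf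
  have hnum : (2:ℝ)^j * r^j ≤ u ^ (n+1:ℕ) := by
    rw [← mul_pow]
    calc (2*r)^j ≤ (u ^ s)^j := h2
    _ = u ^ (s*(j:ℝ)) := h3
    _ ≤ u ^ ((n:ℝ)+1) := h4
    _ = u ^ (n+1:ℕ) := h5
  have hfacpos : (0:ℝ) < (Nat.factorial n : ℝ)/2 := by positivity
  have hdiv : (2:ℝ)^j * r^j / Real.Gamma (1+s*(j:ℝ)) ≤
      u ^ (n+1:ℕ) / ((Nat.factorial n : ℝ)/2) :=
    div_le_div₀ (by positivity) hnum hfacpos hG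
  refine hdiv.trans (le_of_eq ?_)
  have hfp : (Nat.factorial n : ℝ) ≠ 0 := by positivity
  rw [pow_succ]
  field_simp


set_option maxHeartbeats 1000000 in
/-- The entire function `e_{s,β}(x) = Σ_{j≥β} C(j-1,β-1) x^j/Γ(1+sj)` has exponential
growth of order at most `1/s` on all of `ℂ`. -/
theorem e_s_beta_growth (s : ℝ) (hs : 0 < s) (β : ℕ) (hβ : 1 ≤ β) :
    ∃ A B : ℝ, 0 < A ∧ 0 < B ∧ ∀ x : ℂ,
      ‖∑' j : ℕ, if β ≤ j then ((j - 1).choose (β - 1) : ℂ) * x ^ j /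
          Complex.Gamma (1 + (s : ℂ) * j) else 0‖
        ≤ A * Real.exp (B * ‖x‖ ^ (1 / s)) := by
  set q : ℝ := (2:ℝ) ^ (-s) with hqdef
  have hq0 : 0 < q := Real.rpow_pos_of_pos two_pos _
  have hq1 : q < 1 := Real.rpow_lt_one_of_one_lt_of_neg one_lt_two (neg_lt_zero.mpr hs)
  have hq1' : 0 < 1 - q := by linarith
  set K : ℝ := (4+s)/s + 1/(1-q) with hKdef
  have hK : 0 < K := by positivity
  refine ⟨8*K*Real.exp 5, 5*(2:ℝ)^(1/s : ℝ), by positivity,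
    by positivity, fun x => ?_⟩
  set r : ℝ := ‖x‖ with hrdef
  have hr : 0 ≤ r := norm_nonneg x
  set u : ℝ := max 1 ((2*r) ^ (1/s : ℝ)) with hudef
  have hu1 : 1 ≤ u := le_max_left _ _
  have hu0 : 0 < u := lt_of_lt_of_le one_pos hu1
  have hur : 2*r ≤ u ^ s := by
    have h1 : ((2*r) ^ (1/s : ℝ)) ≤ u := le_max_right _ _
    have h2 : ((2*r) ^ (1/s : ℝ)) ^ s ≤ u ^ s :=
      Real.rpow_le_rpow (Real.rpow_nonneg (by positivity) _) h1 hs.le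
    rwa [← Real.rpow_mul (by positivity), one_div, inv_mul_cancel₀ hs.ne',
      Real.rpow_one] at h2
  set N : ℕ := ⌈2*u⌉₊ with hNdef
  have hN : 2*u ≤ N := Nat.le_ceil _
  have hNlt : (N:ℝ) < 2*u + 1 := Nat.ceil_lt_add_one (by positivity)
  set J : ℕ := ⌈(2*u+2)/s⌉₊ with hJdef
  have hJ : (2*u+2)/s ≤ (J:ℝ) := Nat.le_ceil _
  have hJlt : (J:ℝ) < (2*u+2)/s + 1 := Nat.ceil_lt_add_one (by positivity)
  have hsJ : 2*u+2 ≤ s*(J:ℝ) := by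
    rw [div_le_iff₀ hs] at hJ; linarith
  set C : ℝ := 8*u*Real.exp (3*u) with hCdef
  have hC : 0 < C := by positivity
  set f : ℕ → ℂ := fun j => if β ≤ j then ((j - 1).choose (β - 1) : ℂ) * x ^ j /
          Complex.Gamma (1 + (s : ℂ) * j) else 0 with hfdef
  set g : ℕ → ℝ := fun j => C * (if j < J then 1 else q ^ j) with hgdef
  -- the key pointwise bound
  have key : ∀ j : ℕ, ‖f j‖ ≤ g j := by
    intro j
    by_cases hbj : β ≤ j
    · have hGpos : 0 < Real.Gamma (1 + s*(j:ℝ)) :=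
        Real.Gamma_pos_of_pos (by positivity)
      have hnorm : ‖f j‖ = ((j - 1).choose (β - 1) : ℝ) * r^j / Real.Gamma (1 + s*(j:ℝ)) := by
        simp only [hfdef, if_pos hbj]
        rw [show (1 + (s:ℂ)*(j:ℕ)) = ((1 + s*(j:ℝ) : ℝ) : ℂ) by push_cast; ring,
          Complex.Gamma_ofReal]
        rw [norm_div, norm_mul, norm_pow]
        rw [Complex.norm_natCast, Complex.norm_real, Real.norm_eq_abs,
          abs_of_pos hGpos]
      have hc2 : ((j - 1).choose (β - 1) : ℝ) ≤ 2^j := by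
        calc ((j - 1).choose (β - 1) : ℝ) ≤ ((2^(j-1) : ℕ) : ℝ) := by
              exact_mod_cast choose_le_two_pow' (j-1) (β-1)
        _ ≤ ((2^j : ℕ) : ℝ) := by
              exact_mod_cast Nat.pow_le_pow_right (by norm_num) (Nat.sub_le j 1)
        _ = 2^j := by push_cast; ring
      have step1 : ‖f j‖ ≤ (2:ℝ)^j * r^j / Real.Gamma (1 + s*(j:ℝ)) := by
        rw [hnorm]; gcongr
      have step2 := term_real_bound hs hu1 hr hur j
      set n : ℕ := ⌊s*(j:ℝ)⌋₊ with hndef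
      by_cases hjJ : j < J
      · -- head
        have h3 : u ^ n / Nat.factorial n ≤ Real.exp u := pow_div_factorial_le_exp' hu0.le n
        have h4 : Real.exp u ≤ Real.exp (3*u) := Real.exp_le_exp.mpr (by linarith)
        have : ‖f j‖ ≤ 2*u*Real.exp (3*u) := by
          refine (step1.trans step2).trans ?_
          have := h3.trans h4
          nlinarith [hu0]
        simp only [hgdef, if_pos hjJ, mul_one]
        refine this.trans ?_
        rw [hCdef]
        nlinarith [Real.exp_pos (3*u), hu0]
      · -- tail
        push_neg at hjJ
        have hjJ' : (J:ℝ) ≤ (j:ℝ) := by exact_mod_cast hjJ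
        have hsj : 2*u+2 ≤ s*(j:ℝ) := by
          refine hsJ.trans ?_
          exact mul_le_mul_of_nonneg_left hjJ' hs.le
        have hfl : s*(j:ℝ) < (n:ℝ)+1 := Nat.lt_floor_add_one _
        have hNn : N ≤ n := by
          have : (N:ℝ) < (n:ℝ) := by linarith
          exact_mod_cast this.le
        have htail := tail_pow_bound hu0.le hN n hNn
        have h2n : (0:ℝ) < 2^n := by positivity
        have htail' : u ^ n / Nat.factorial n ≤ Real.exp u * 2^N * ((2:ℝ)^n)⁻¹ := by
          rw [← le_div_iff₀ h2n] at htail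
          rw [div_eq_mul_inv] at htail
          exact htail
        have h2N : (2:ℝ)^N ≤ 2*Real.exp (2*u) := by
          have e1 : ((2:ℝ)^N : ℝ) = (2:ℝ) ^ ((N:ℝ)) := (Real.rpow_natCast 2 N).symm
          have e2 : (2:ℝ) ^ ((N:ℝ)) ≤ (2:ℝ) ^ (2*u+1) :=
            Real.rpow_le_rpow_of_exponent_le one_le_two hNlt.le
          have e3 : (2:ℝ) ^ (2*u+1) = (2:ℝ)^(2*u) * 2 := by
            rw [Real.rpow_add two_pos, Real.rpow_one]
          have e4 : (2:ℝ)^(2*u) = Real.exp (Real.log 2 * (2*u)) :=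
            Real.rpow_def_of_pos two_pos _
          have hlog2 : Real.log 2 ≤ 1 := by
            have := Real.log_le_sub_one_of_pos (two_pos (α := ℝ))
            linarith
          have e5 : Real.exp (Real.log 2 * (2*u)) ≤ Real.exp (2*u) := by
            apply Real.exp_le_exp.mpr
            nlinarith [Real.log_nonneg (one_le_two (α := ℝ)), hu0]
          calc ((2:ℝ)^N : ℝ) = (2:ℝ) ^ ((N:ℝ)) := e1
          _ ≤ (2:ℝ) ^ (2*u+1) := e2
          _ = (2:ℝ)^(2*u) * 2 := e3
          _ = Real.exp (Real.log 2 * (2*u)) * 2 := by rw [e4]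
          _ ≤ Real.exp (2*u) * 2 := by linarith [e5]
          _ = 2*Real.exp (2*u) := by ring
        have hqn : ((2:ℝ)^n)⁻¹ ≤ 2 * q^j := by
          have e1 : ((2:ℝ)^n)⁻¹ = (2:ℝ) ^ (-(n:ℝ)) := by
            rw [Real.rpow_neg two_pos.le, Real.rpow_natCast]
          have e2 : (2:ℝ) ^ (-(n:ℝ)) ≤ (2:ℝ) ^ (1 - s*(j:ℝ)) :=
            Real.rpow_le_rpow_of_exponent_le one_le_two (by linarith)
          have e3 : (2:ℝ) ^ (1 - s*(j:ℝ)) = 2 * (2:ℝ) ^ (-(s*(j:ℝ))) := by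
            rw [show (1 - s*(j:ℝ)) = 1 + (-(s*(j:ℝ))) by ring, Real.rpow_add two_pos,
              Real.rpow_one]
          have e4 : (2:ℝ) ^ (-(s*(j:ℝ))) = q^j := by
            rw [show (-(s*(j:ℝ))) = (-s) * (j:ℝ) by ring, Real.rpow_mul two_pos.le,
              Real.rpow_natCast]
          rw [e1]
          calc (2:ℝ) ^ (-(n:ℝ)) ≤ (2:ℝ) ^ (1 - s*(j:ℝ)) := e2
          _ = 2 * (2:ℝ) ^ (-(s*(j:ℝ))) := e3
          _ = 2 * q^j := by rw [e4]
        have hfinal : u ^ n / Nat.factorial n ≤ 4 * Real.exp (3*u) * q^j := by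
          have hqj : (0:ℝ) ≤ q^j := by positivity
          calc u ^ n / Nat.factorial n ≤ Real.exp u * 2^N * ((2:ℝ)^n)⁻¹ := htail'
          _ ≤ Real.exp u * (2*Real.exp (2*u)) * (2 * q^j) := by
              have h1 : (0:ℝ) ≤ Real.exp u * 2^N := by positivity
              have h2 : Real.exp u * 2^N ≤ Real.exp u * (2*Real.exp (2*u)) :=
                mul_le_mul_of_nonneg_left h2N (Real.exp_pos u).le
              have h3 : ((2:ℝ)^n)⁻¹ ≤ 2*q^j := hqn
              have h4 : (0:ℝ) ≤ ((2:ℝ)^n)⁻¹ := by positivity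
              nlinarith [Real.exp_pos u, Real.exp_pos (2*u)]
          _ = 4 * (Real.exp u * Real.exp (2*u)) * q^j := by ring
          _ = 4 * Real.exp (3*u) * q^j := by
              rw [← Real.exp_add, show u + 2*u = 3*u by ring]
        simp only [hgdef, if_neg (not_lt.mpr hjJ)]
        refine (step1.trans step2).trans ?_
        rw [hCdef]
        nlinarith [hfinal, hu0, Real.exp_pos (3*u), pow_nonneg hq0.le j]
    · simp only [hfdef, if_neg hbj, norm_zero, hgdef]
      positivity
  -- summability
  have hif_sum : Summable (fun j : ℕ => (if j < J then (1:ℝ) else q ^ j)) := by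
    have hs1 : Summable (fun j : ℕ => (if j < J then (1:ℝ) else 0)) :=
      summable_of_ne_finset_zero (s := Finset.range J) (fun b hb => by
        simp only [Finset.mem_range, not_lt] at hb
        exact if_neg (not_lt.mpr hb))
    have hs2 : Summable (fun j : ℕ => q ^ j) := summable_geometric_of_lt_one hq0.le hq1
    refine Summable.of_nonneg_of_le (fun j => by positivity) (fun j => ?_) (hs1.add hs2)
    by_cases h : j < J
    · simp only [if_pos h]
      have : (0:ℝ) ≤ q ^ j := by positivity
      linarith
    · simp only [if_neg h]
      linarith [le_refl (q^j)]
  have hg_sum : Summable g := hif_sum.mul_left C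
  have hf_sum : Summable (fun j => ‖f j‖) :=
    Summable.of_nonneg_of_le (fun j => norm_nonneg _) key hg_sum
  have bound1 : ‖∑' j, f j‖ ≤ ∑' j, ‖f j‖ := norm_tsum_le_tsum_norm hf_sum
  have bound2 : ∑' j, ‖f j‖ ≤ ∑' j, g j := Summable.tsum_le_tsum key hf_sum hg_sum
  have bound3 : ∑' j, g j = C * ∑' j, (if j < J then (1:ℝ) else q ^ j) := tsum_mul_left
  have bound4 : ∑' j : ℕ, (if j < J then (1:ℝ) else q ^ j) ≤ (J:ℝ) + (1-q)⁻¹ := by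
    have hsplit := Summable.sum_add_tsum_nat_add J hif_sum
    rw [← hsplit]
    have hhead : ∑ i ∈ Finset.range J, (if i < J then (1:ℝ) else q ^ i) = (J:ℝ) := by
      rw [Finset.sum_congr rfl (fun i hi => if_pos (Finset.mem_range.mp hi))]
      simp
    have htail_sum : Summable (fun i : ℕ => q ^ (i + J)) := by
      simpa [pow_add] using (summable_geometric_of_lt_one hq0.le hq1).mul_right (q^J)
    have htail : ∑' i : ℕ, (if i + J < J then (1:ℝ) else q ^ (i + J)) ≤ (1-q)⁻¹ := by
      have heq : (fun i : ℕ => (if i + J < J then (1:ℝ) else q ^ (i + J)))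
          = fun i : ℕ => q ^ (i + J) := by
        funext i; rw [if_neg (by omega)]
      rw [heq]
      calc ∑' i : ℕ, q ^ (i + J) ≤ ∑' i : ℕ, q ^ i := by
            apply Summable.tsum_le_tsum _ htail_sum (summable_geometric_of_lt_one hq0.le hq1)
            intro i
            exact pow_le_pow_of_le_one hq0.le hq1.le (by omega)
      _ = (1-q)⁻¹ := tsum_geometric_of_lt_one hq0.le hq1
    rw [hhead]
    linarith [htail]
  -- final numeric estimate
  have hJK : (J:ℝ) + (1-q)⁻¹ ≤ u*K := by
    have h1 : (J:ℝ) ≤ u*((4+s)/s) := by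
      have heq : (2*u+2)/s + 1 = (2*u+2+s)/s := by field_simp
      have h2 : 2*u+2+s ≤ (4+s)*u := by nlinarith [hu1, hs]
      have h3 : (J:ℝ) < (2*u+2+s)/s := by rw [← heq]; exact hJlt
      have h4 : (2*u+2+s)/s ≤ ((4+s)*u)/s := by gcongr
      have h5 : ((4+s)*u)/s = u*((4+s)/s) := by field_simp
      linarith [h3.le.trans (h5 ▸ h4)]
    have h2 : (1-q)⁻¹ ≤ u*(1-q)⁻¹ := by
      nlinarith [inv_pos.mpr hq1', hu1]
    have hKexp : u*K = u*((4+s)/s) + u*(1/(1-q)) := by rw [hKdef]; ring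
    rw [hKexp, one_div]
    linarith
  have huexp : u ≤ Real.exp u := by linarith [Real.add_one_le_exp u]
  have hfive : C * ((J:ℝ) + (1-q)⁻¹) ≤ 8*K*Real.exp (5*u) := by
    have h1 : C * ((J:ℝ) + (1-q)⁻¹) ≤ C * (u*K) :=
      mul_le_mul_of_nonneg_left hJK hC.le
    have h2 : C * (u*K) = 8*K*(u*u*Real.exp (3*u)) := by rw [hCdef]; ring
    have h3 : u*u*Real.exp (3*u) ≤ Real.exp u * Real.exp u * Real.exp (3*u) := by
      have huu : u*u ≤ Real.exp u * Real.exp u :=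
        mul_le_mul huexp huexp hu0.le (Real.exp_pos u).le
      exact mul_le_mul_of_nonneg_right huu (Real.exp_pos (3*u)).le
    have h4 : Real.exp u * Real.exp u * Real.exp (3*u) = Real.exp (5*u) := by
      rw [← Real.exp_add, ← Real.exp_add]; ring_nf
    calc C * ((J:ℝ) + (1-q)⁻¹) ≤ C * (u*K) := h1
    _ = 8*K*(u*u*Real.exp (3*u)) := h2
    _ ≤ 8*K*(Real.exp u * Real.exp u * Real.exp (3*u)) := by
        apply mul_le_mul_of_nonneg_left h3 (by positivity)
    _ = 8*K*Real.exp (5*u) := by rw [h4]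
  have hulin : u ≤ 1 + (2:ℝ)^(1/s : ℝ) * r^(1/s : ℝ) := by
    have hw : ((2*r) ^ (1/s : ℝ)) = (2:ℝ)^(1/s : ℝ) * r^(1/s : ℝ) :=
      Real.mul_rpow (by norm_num) hr
    have hw0 : (0:ℝ) ≤ (2:ℝ)^(1/s : ℝ) * r^(1/s : ℝ) := by positivity
    apply max_le (by linarith)
    rw [hw]; linarith
  have hexp5 : Real.exp (5*u) ≤ Real.exp 5 * Real.exp (5*(2:ℝ)^(1/s : ℝ) * r^(1/s : ℝ)) := by
    rw [← Real.exp_add]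
    apply Real.exp_le_exp.mpr
    nlinarith [hulin]
  calc ‖∑' j, f j‖ ≤ ∑' j, ‖f j‖ := bound1
  _ ≤ ∑' j, g j := bound2
  _ = C * ∑' j, (if j < J then (1:ℝ) else q ^ j) := bound3
  _ ≤ C * ((J:ℝ) + (1-q)⁻¹) := mul_le_mul_of_nonneg_left bound4 hC.le
  _ ≤ 8*K*Real.exp (5*u) := hfive
  _ ≤ 8*K*(Real.exp 5 * Real.exp (5*(2:ℝ)^(1/s : ℝ) * r^(1/s : ℝ))) := by
      apply mul_le_mul_of_nonneg_left hexp5 (by positivity)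
  _ = 8*K*Real.exp 5 * Real.exp (5*(2:ℝ)^(1/s : ℝ) * r^(1/s : ℝ)) := by ring
end

section
/- Let m be a function on the nonnegative integers satisfying c^n Γ_s(n) ≤ m(n) ≤ C^n Γ_s(n) for some constants 0 < c ≤ C and all n ∈ ℕ, where Γ_s(n) = Γ(1+sn) for s ≥ 0 and Γ_s(n) = 1/Γ(1−sn) for s < 0. Then for every formal power series û = Σ u_j x^j with complex coefficients and every s₁ ∈ ℝ, û has Gevrey order s₁ (i.e., Σ u_j x^j / Γ_{s₁}(j) has positive radius of convergence) if and only if the m-moment Borel transform B_m û = Σ (u_j / m(j)) x^j has Gevrey order s₁ − s. -/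
noncomputable def GammaS (s : ℝ) (n : ℕ) : ℝ :=
  if 0 ≤ s then Real.Gamma (1 + s * n) else (Real.Gamma (1 - s * n))⁻¹

/-!
Both Gevrey conditions say that a sequence is bounded by a given one up to a geometric factor
`A Bⁿ`, and up to such factors `m ≍ Γ_s` and `Γ_{s₁} ≍ Γ_s Γ_{s₁ - s}`. The second comparison
comes from the Beta integral: for `x, y ≥ 1` one has `(2 · 4^(x+y))⁻¹ ≤ B(x, y) ≤ 1`, so
`Γ(1 + p n) Γ(1 + q n)` and `Γ(1 + (p + q) n)` agree up to geometric factors when `p, q ≥ 0`.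
The other sign patterns reduce to this one through `Γ_{-s} = Γ_s⁻¹`.
-/

open MeasureTheory intervalIntegral Set

noncomputable def betaIntegrand (x y t : ℝ) : ℝ := t ^ (x - 1) * (1 - t) ^ (y - 1)

section Beta

variable {x y : ℝ}

lemma betaIntegrand_nonneg (x y : ℝ) {t : ℝ} (ht : t ∈ Icc (0 : ℝ) 1) :
    0 ≤ betaIntegrand x y t :=
  mul_nonneg (Real.rpow_nonneg ht.1 _) (Real.rpow_nonneg (sub_nonneg.2 ht.2) _)

lemma intervalIntegrable_betaIntegrand (hx : 1 ≤ x) (hy : 1 ≤ y) (a b : ℝ) :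
    IntervalIntegrable (betaIntegrand x y) volume a b :=
  ((continuous_id.rpow_const fun _ => Or.inr (by linarith)).mul
    ((continuous_const.sub continuous_id).rpow_const fun _ => Or.inr (by linarith))
    ).intervalIntegrable a b

lemma Real.Gamma_mul_Gamma_eq_mul_integral (hx : 0 < x) (hy : 0 < y) :
    Real.Gamma x * Real.Gamma y =
      Real.Gamma (x + y) * ∫ t in (0 : ℝ)..1, betaIntegrand x y t := by
  have hβ : Complex.betaIntegral x y = ((∫ t in (0 : ℝ)..1, betaIntegrand x y t : ℝ) : ℂ) := by
    rw [Complex.betaIntegral, ← intervalIntegral.integral_ofReal]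
    refine intervalIntegral.integral_congr fun t ht => ?_
    rw [uIcc_of_le zero_le_one] at ht
    simp only [betaIntegrand, Complex.ofReal_mul,
      Complex.ofReal_cpow ht.1, Complex.ofReal_cpow (sub_nonneg.2 ht.2)]
    push_cast
    ring
  have h := Complex.Gamma_mul_Gamma_eq_betaIntegral (s := (x : ℂ)) (t := (y : ℂ))
    (by simpa using hx) (by simpa using hy)
  rw [hβ] at h
  simpa [← Complex.ofReal_mul, Complex.Gamma_ofReal, ← Complex.ofReal_add] using
    congrArg Complex.re h

lemma integral_betaIntegrand_le_one (hx : 1 ≤ x) (hy : 1 ≤ y) :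
    ∫ t in (0 : ℝ)..1, betaIntegrand x y t ≤ 1 := by
  calc ∫ t in (0 : ℝ)..1, betaIntegrand x y t ≤ ∫ _ in (0 : ℝ)..1, (1 : ℝ) :=
        integral_mono_on zero_le_one (intervalIntegrable_betaIntegrand hx hy 0 1)
          intervalIntegrable_const fun t ht =>
            mul_le_one₀ (Real.rpow_le_one ht.1 ht.2 (by linarith))
              (Real.rpow_nonneg (sub_nonneg.2 ht.2) _)
              (Real.rpow_le_one (sub_nonneg.2 ht.2) (by linarith [ht.1]) (by linarith))
    _ = 1 := by simp

lemma inv_two_mul_four_rpow_le_integral_betaIntegrand (hx : 1 ≤ x) (hy : 1 ≤ y) :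
    (2 * (4 : ℝ) ^ (x + y))⁻¹ ≤ ∫ t in (0 : ℝ)..1, betaIntegrand x y t := by
  have quarter_le {a t : ℝ} (ha : 1 ≤ a) (ht : 1 / 4 ≤ t) : (1 / 4 : ℝ) ^ a ≤ t ^ (a - 1) :=
    (Real.rpow_le_rpow_of_exponent_ge (by norm_num) (by norm_num) (by linarith)).trans
      (Real.rpow_le_rpow (by norm_num) ht (by linarith))
  calc (2 * (4 : ℝ) ^ (x + y))⁻¹ = ∫ _ in (1 / 4 : ℝ)..(3 / 4), (1 / 4 : ℝ) ^ x * (1 / 4) ^ y := by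
        rw [intervalIntegral.integral_const, smul_eq_mul, ← Real.rpow_add (by norm_num), one_div,
          Real.inv_rpow (by norm_num), mul_inv]
        norm_num
    _ ≤ ∫ t in (1 / 4 : ℝ)..(3 / 4), betaIntegrand x y t :=
        integral_mono_on (by norm_num) intervalIntegrable_const
          (intervalIntegrable_betaIntegrand hx hy _ _) fun t ht =>
            mul_le_mul (quarter_le hx ht.1) (quarter_le hy (by linarith [ht.2]))
              (by positivity) (Real.rpow_nonneg (by linarith [ht.1]) _)
    _ ≤ ∫ t in (0 : ℝ)..1, betaIntegrand x y t :=
        integral_mono_interval (by norm_num) (by norm_num) (by norm_num)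
          ((ae_restrict_iff' measurableSet_Ioc).2 (ae_of_all _ fun t ht =>
            betaIntegrand_nonneg x y (Ioc_subset_Icc_self ht)))
          (intervalIntegrable_betaIntegrand hx hy 0 1)

lemma Real.Gamma_mul_Gamma_le_Gamma_add (hx : 1 ≤ x) (hy : 1 ≤ y) :
    Real.Gamma x * Real.Gamma y ≤ Real.Gamma (x + y) := by
  rw [Real.Gamma_mul_Gamma_eq_mul_integral (by linarith) (by linarith)]
  exact mul_le_of_le_one_right (Real.Gamma_pos_of_pos (by linarith)).le
    (integral_betaIntegrand_le_one hx hy)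

lemma Real.Gamma_add_le_two_mul_four_rpow_mul (hx : 1 ≤ x) (hy : 1 ≤ y) :
    Real.Gamma (x + y) ≤ 2 * (4 : ℝ) ^ (x + y) * (Real.Gamma x * Real.Gamma y) := by
  have hc : 0 < 2 * (4 : ℝ) ^ (x + y) := by positivity
  rw [Real.Gamma_mul_Gamma_eq_mul_integral (by linarith) (by linarith), ← div_le_iff₀' hc,
    div_eq_mul_inv]
  exact mul_le_mul_of_nonneg_left (inv_two_mul_four_rpow_le_integral_betaIntegrand hx hy)
    (Real.Gamma_pos_of_pos (by linarith)).le

end Beta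

def GeomBoundedBy (f g : ℕ → ℝ) : Prop :=
  ∃ A B : ℝ, 0 < A ∧ 0 < B ∧ ∀ n, f n ≤ A * B ^ n * g n

def GeomEquiv (f g : ℕ → ℝ) : Prop :=
  GeomBoundedBy f g ∧ GeomBoundedBy g f

section Geom

variable {f g h k : ℕ → ℝ}

lemma GeomBoundedBy.trans (hfg : GeomBoundedBy f g) (hgh : GeomBoundedBy g h) :
    GeomBoundedBy f h := by
  obtain ⟨A, B, hA, hB, hfg⟩ := hfg
  obtain ⟨A', B', hA', hB', hgh⟩ := hgh
  refine ⟨A * A', B * B', by positivity, by positivity, fun n => ?_⟩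
  calc f n ≤ A * B ^ n * g n := hfg n
    _ ≤ A * B ^ n * (A' * B' ^ n * h n) := by gcongr; exact hgh n
    _ = A * A' * (B * B') ^ n * h n := by ring

lemma GeomBoundedBy.mul_right (hfg : GeomBoundedBy f g) (hk : ∀ n, 0 ≤ k n) :
    GeomBoundedBy (f * k) (g * k) := by
  obtain ⟨A, B, hA, hB, hfg⟩ := hfg
  exact ⟨A, B, hA, hB, fun n => by
    simpa only [Pi.mul_apply, mul_assoc] using mul_le_mul_of_nonneg_right (hfg n) (hk n)⟩

lemma GeomBoundedBy.inv (hfg : GeomBoundedBy f g) (hf : ∀ n, 0 < f n) (hg : ∀ n, 0 < g n) :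
    GeomBoundedBy g⁻¹ f⁻¹ := by
  obtain ⟨A, B, hA, hB, hfg⟩ := hfg
  refine ⟨A, B, hA, hB, fun n => ?_⟩
  rw [Pi.inv_apply, Pi.inv_apply, ← div_eq_mul_inv, le_div_iff₀ (hf n), ← div_eq_inv_mul,
    div_le_iff₀ (hg n)]
  exact hfg n

lemma geomBoundedBy_div_iff (hh : ∀ n, 0 < h n) :
    GeomBoundedBy (fun n => f n / h n) g ↔ GeomBoundedBy f (h * g) := by
  refine exists₂_congr fun A B => and_congr_right' <| and_congr_right' <| forall_congr' fun n => ?_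
  rw [div_le_iff₀ (hh n), Pi.mul_apply, mul_comm (h n), ← mul_assoc]

lemma GeomEquiv.symm (hfg : GeomEquiv f g) : GeomEquiv g f :=
  ⟨hfg.2, hfg.1⟩

lemma GeomEquiv.trans (hfg : GeomEquiv f g) (hgh : GeomEquiv g h) : GeomEquiv f h :=
  ⟨hfg.1.trans hgh.1, hgh.2.trans hfg.2⟩

lemma GeomEquiv.mul_right (hfg : GeomEquiv f g) (hk : ∀ n, 0 ≤ k n) :
    GeomEquiv (f * k) (g * k) :=
  ⟨hfg.1.mul_right hk, hfg.2.mul_right hk⟩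

lemma GeomEquiv.inv (hfg : GeomEquiv f g) (hf : ∀ n, 0 < f n) (hg : ∀ n, 0 < g n) :
    GeomEquiv f⁻¹ g⁻¹ :=
  ⟨hfg.2.inv hg hf, hfg.1.inv hf hg⟩

end Geom

lemma geomEquiv_Gamma_add {p q : ℝ} (hp : 0 ≤ p) (hq : 0 ≤ q) :
    GeomEquiv (fun n : ℕ => Real.Gamma (1 + (p + q) * n))
      (fun n : ℕ => Real.Gamma (1 + p * n) * Real.Gamma (1 + q * n)) := by
  have one_le {r : ℝ} (hr : 0 ≤ r) (n : ℕ) : 1 ≤ 1 + r * n := by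
    have := mul_nonneg hr n.cast_nonneg; linarith
  have hpq := add_nonneg hp hq
  have Gamma_succ (n : ℕ) : Real.Gamma ((1 + p * n) + (1 + q * n)) =
      (1 + (p + q) * n) * Real.Gamma (1 + (p + q) * n) := by
    rw [← Real.Gamma_add_one (by linarith [one_le hpq n])]
    ring_nf
  constructor
  · refine ⟨2 * 4 ^ 2, 4 ^ (p + q), by positivity, by positivity, fun n => ?_⟩
    calc Real.Gamma (1 + (p + q) * n)
        ≤ (1 + (p + q) * n) * Real.Gamma (1 + (p + q) * n) :=
          le_mul_of_one_le_left (Real.Gamma_pos_of_pos (by linarith [one_le hpq n])).le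
            (one_le hpq n)
      _ = Real.Gamma ((1 + p * n) + (1 + q * n)) := (Gamma_succ n).symm
      _ ≤ 2 * 4 ^ ((1 + p * n) + (1 + q * n)) * (Real.Gamma (1 + p * n) * Real.Gamma (1 + q * n)) :=
          Real.Gamma_add_le_two_mul_four_rpow_mul (one_le hp n) (one_le hq n)
      _ = 2 * 4 ^ 2 * ((4 : ℝ) ^ (p + q)) ^ n *
            (Real.Gamma (1 + p * n) * Real.Gamma (1 + q * n)) := by
          rw [show (1 + p * n) + (1 + q * n) = 2 + (p + q) * n by ring,
            Real.rpow_add (by norm_num), Real.rpow_mul (by norm_num), Real.rpow_natCast,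
            Real.rpow_two]
          ring
  · refine ⟨1, 1 + (p + q), one_pos, by linarith, fun n => ?_⟩
    calc Real.Gamma (1 + p * n) * Real.Gamma (1 + q * n)
        ≤ Real.Gamma ((1 + p * n) + (1 + q * n)) :=
          Real.Gamma_mul_Gamma_le_Gamma_add (one_le hp n) (one_le hq n)
      _ = (1 + (p + q) * n) * Real.Gamma (1 + (p + q) * n) := Gamma_succ n
      _ ≤ 1 * (1 + (p + q)) ^ n * Real.Gamma (1 + (p + q) * n) := by
          rw [one_mul, mul_comm (p + q)]
          exact mul_le_mul_of_nonneg_right (one_add_mul_le_pow (by linarith) n)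
            (Real.Gamma_pos_of_pos (by linarith [one_le hpq n])).le

lemma GammaS_of_nonneg {s : ℝ} (hs : 0 ≤ s) : GammaS s = fun n : ℕ => Real.Gamma (1 + s * n) :=
  funext fun _ => if_pos hs

lemma GammaS_neg (s : ℝ) : GammaS (-s) = (GammaS s)⁻¹ := by
  funext n
  rcases lt_trichotomy s 0 with hs | rfl | hs
  · simp [GammaS, hs.le, hs.not_ge, sub_eq_add_neg]
  · simp [GammaS]
  · simp [GammaS, hs.le, hs.not_ge]

lemma GammaS_pos (s : ℝ) (n : ℕ) : 0 < GammaS s n := by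
  rcases le_total 0 s with hs | hs
  · rw [GammaS_of_nonneg hs]
    exact Real.Gamma_pos_of_pos (by positivity)
  · rw [← neg_neg s, GammaS_neg, GammaS_of_nonneg (neg_nonneg.2 hs), Pi.inv_apply, inv_pos]
    exact Real.Gamma_pos_of_pos (by have := neg_nonneg.2 hs; positivity)

lemma geomEquiv_GammaS_add (a b : ℝ) : GeomEquiv (GammaS (a + b)) (GammaS a * GammaS b) := by
  have nonneg {a b : ℝ} (ha : 0 ≤ a) (hb : 0 ≤ b) :
      GeomEquiv (GammaS (a + b)) (GammaS a * GammaS b) := by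
    rw [GammaS_of_nonneg ha, GammaS_of_nonneg hb, GammaS_of_nonneg (add_nonneg ha hb)]
    exact geomEquiv_Gamma_add ha hb
  have neg {a b : ℝ} (h : GeomEquiv (GammaS (a + b)) (GammaS a * GammaS b)) :
      GeomEquiv (GammaS (-a + -b)) (GammaS (-a) * GammaS (-b)) := by
    rw [← neg_add, GammaS_neg, GammaS_neg, GammaS_neg, ← mul_inv]
    exact h.inv (GammaS_pos _) fun n => mul_pos (GammaS_pos a n) (GammaS_pos b n)
  have shift {a b : ℝ} (h : GeomEquiv (GammaS (a + b)) (GammaS a * GammaS b)) :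
      GeomEquiv (GammaS (a + b + -b)) (GammaS (a + b) * GammaS (-b)) := by
    have := h.mul_right fun n => (GammaS_pos (-b) n).le
    have cancel : GammaS a * GammaS b * GammaS (-b) = GammaS a := by
      funext n
      simp [GammaS_neg, (GammaS_pos b n).ne']
    rw [add_neg_cancel_right, ← cancel]
    exact this.symm
  have comm {a b : ℝ} (h : GeomEquiv (GammaS (a + b)) (GammaS a * GammaS b)) :
      GeomEquiv (GammaS (b + a)) (GammaS b * GammaS a) := by
    rwa [add_comm, mul_comm]
  have mixed {a b : ℝ} (ha : 0 ≤ a) (hb : b ≤ 0) :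
      GeomEquiv (GammaS (a + b)) (GammaS a * GammaS b) := by
    rcases le_total 0 (a + b) with hab | hab
    · simpa using shift (nonneg hab (neg_nonneg.2 hb))
    · simpa using comm (neg (shift (nonneg (neg_nonneg.2 hab) ha)))
  rcases le_total 0 a with ha | ha <;> rcases le_total 0 b with hb | hb
  · exact nonneg ha hb
  · exact mixed ha hb
  · exact comm (mixed hb ha)
  · simpa using neg (nonneg (neg_nonneg.2 ha) (neg_nonneg.2 hb))

/-- If `m` grows like `Γ_s`, then a formal power series `Σ u_j x^j` has Gevrey order `s₁`
iff its `m`-moment Borel transform `Σ (u_j/m(j)) x^j` has Gevrey order `s₁ − s`. -/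
theorem borel_gevrey_shift (m : ℕ → ℝ) (s : ℝ) (c C : ℝ) (hc : 0 < c) (hcC : c ≤ C)
    (hm : ∀ n, c ^ n * GammaS s n ≤ m n ∧ m n ≤ C ^ n * GammaS s n)
    (u : ℕ → ℂ) (s₁ : ℝ) :
    (∃ A B : ℝ, 0 < A ∧ 0 < B ∧ ∀ j, ‖u j‖ ≤ A * B ^ j * GammaS s₁ j) ↔
    (∃ A B : ℝ, 0 < A ∧ 0 < B ∧ ∀ j, ‖u j / (m j : ℂ)‖ ≤ A * B ^ j * GammaS (s₁ - s) j) := by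
  have hm_pos (n : ℕ) : 0 < m n := (mul_pos (pow_pos hc n) (GammaS_pos s n)).trans_le (hm n).1
  have hm_equiv : GeomEquiv m (GammaS s) :=
    ⟨⟨1, C, one_pos, hc.trans_le hcC, fun n => by simpa using (hm n).2⟩,
      ⟨1, c⁻¹, one_pos, inv_pos.2 hc, fun n => by
        rw [one_mul, inv_pow, inv_mul_eq_div, le_div_iff₀' (pow_pos hc n)]
        exact (hm n).1⟩⟩
  have h_equiv : GeomEquiv (GammaS s₁) (m * GammaS (s₁ - s)) := by
    simpa using (geomEquiv_GammaS_add s (s₁ - s)).trans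
      (hm_equiv.symm.mul_right fun n => (GammaS_pos (s₁ - s) n).le)
  have h_norm : (fun j => ‖u j / (m j : ℂ)‖) = fun j => ‖u j‖ / m j := by
    funext j
    rw [norm_div, Complex.norm_real, Real.norm_of_nonneg (hm_pos j).le]
  change GeomBoundedBy (fun j => ‖u j‖) (GammaS s₁) ↔
    GeomBoundedBy (fun j => ‖u j / (m j : ℂ)‖) (GammaS (s₁ - s))
  rw [h_norm, geomBoundedBy_div_iff hm_pos]
  exact ⟨fun h => h.trans h_equiv.1, fun h => h.trans h_equiv.2⟩
end

section
/- Let m be a function ℕ → ℂ∖{0} and λ ∈ ℂ, and let β ≥ 1 be an integer. Given a formal power series ĝ(t) = Σ_{j≥0} (g_j/m(j)) t^j with coefficients in a commutative ring (or Banach space with scalar λ), the unique formal power series û satisfying (∂_{m,t} − λ)^β û = ĝ with ∂^j_{m,t} û(0) = 0 for j = 0,…,β−1 is given by û = Σ_{k≥β−1} C(k, β−1) (∂^{-1}_{m,t})^{k+1} λ^{k−β+1} ĝ. -/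
/-!
In `u`-coefficients `∂_{m,t}` is the shift, so `(∂_{m,t} − λ)` acts by `u ↦ u(j+1) − λ u(j)`.
Writing `S_n` for the candidate solution with `β = n + 1`, Pascal's rule
`C(k+1, n+1) = C(k, n) + C(k, n+1)` gives `(∂_{m,t} − λ) S_{n+1} = S_n` and `(∂_{m,t} − λ) S_0 = ĝ`,
so `S_n` solves the equation, and it visibly vanishes below `n + 1`. Uniqueness holds because
`u(j+1) = λ u(j)` together with `u(0) = 0` forces `u = 0`; this peels off one factor at a time.
-/

/-- The moment differentiation `∂_{m,t}`, acting on the `u`-coefficient sequence of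
`Σ (u_j/m(j)) t^j`, is the shift `u_j ↦ u_{j+1}` (independent of `m` in this
representation). -/
noncomputable def shiftE : Module.End ℂ (ℕ → ℂ) where
  toFun a := fun j => a (j + 1)
  map_add' a b := by funext j; simp
  map_smul' c a := by funext j; simp

open Finset

section IteratedSolution

variable {R : Type*} [CommSemiring R] (lam : R) (g : ℕ → R)

/-- The `u`-coefficients of `Σ_{k ≥ n} C(k, n) (∂^{-1}_{m,t})^{k+1} λ^{k-n} ĝ`; the terms with
`k < n` vanish, which lets the sum run over all of `range j`. -/
def iteratedSolution (n j : ℕ) : R :=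
  ∑ k ∈ range j, (k.choose n : R) * lam ^ (k - n) * g (j - k - 1)

theorem sum_Ico_eq_iteratedSolution (n j : ℕ) :
    ∑ k ∈ Ico n j, (k.choose n : R) * lam ^ (k - n) * g (j - k - 1) =
      iteratedSolution lam g n j := by
  refine sum_subset (fun k hk => mem_range.2 (mem_Ico.1 hk).2) fun k hkj hkn => ?_
  have hk : k < n := not_le.1 fun hnk => hkn (mem_Ico.2 ⟨hnk, mem_range.1 hkj⟩)
  simp [Nat.choose_eq_zero_of_lt hk]

theorem iteratedSolution_eq_zero_of_le {n j : ℕ} (h : j ≤ n) : iteratedSolution lam g n j = 0 :=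
  sum_eq_zero fun k hk => by
    simp [Nat.choose_eq_zero_of_lt ((mem_range.1 hk).trans_le h)]

theorem choose_succ_mul_pow_sub (k n : ℕ) :
    (k.choose (n + 1) : R) * lam ^ (k - n) =
      lam * ((k.choose (n + 1) : R) * lam ^ (k - (n + 1))) := by
  rcases le_or_gt k n with hkn | hnk
  · simp [Nat.choose_eq_zero_of_lt (Nat.lt_succ_of_le hkn)]
  · rw [show k - n = k - (n + 1) + 1 by omega, pow_succ]
    ring

theorem iteratedSolution_zero_succ (j : ℕ) :
    iteratedSolution lam g 0 (j + 1) = g j + lam * iteratedSolution lam g 0 j := by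
  rw [iteratedSolution, sum_range_succ', add_comm, iteratedSolution, mul_sum]
  congr 1
  · simp
  · refine sum_congr rfl fun k _ => ?_
    rw [show j + 1 - (k + 1) - 1 = j - k - 1 by omega, Nat.choose_zero_right, Nat.choose_zero_right, Nat.sub_zero, Nat.sub_zero, pow_succ]
    ring

theorem iteratedSolution_succ_succ (n j : ℕ) :
    iteratedSolution lam g (n + 1) (j + 1) =
      iteratedSolution lam g n j + lam * iteratedSolution lam g (n + 1) j := by
  rw [iteratedSolution, sum_range_succ', Nat.choose_zero_succ, Nat.cast_zero, zero_mul, zero_mul,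
    add_zero, iteratedSolution, iteratedSolution, mul_sum, ← sum_add_distrib]
  refine sum_congr rfl fun k _ => ?_
  rw [show j + 1 - (k + 1) - 1 = j - k - 1 by omega, Nat.add_sub_add_right,
    Nat.choose_succ_succ', Nat.cast_add, add_mul, add_mul, choose_succ_mul_pow_sub]
  ring

end IteratedSolution

section ShiftSubSmul

variable (lam : ℂ)

theorem shiftE_sub_smul_one_apply (u : ℕ → ℂ) (j : ℕ) :
    ((shiftE - lam • (1 : Module.End ℂ (ℕ → ℂ))) u) j = u (j + 1) - lam * u j := by
  simp [shiftE]

theorem shiftE_sub_smul_one_iteratedSolution_zero (g : ℕ → ℂ) :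
    (shiftE - lam • (1 : Module.End ℂ (ℕ → ℂ))) (iteratedSolution lam g 0) = g := by
  funext j
  rw [shiftE_sub_smul_one_apply, iteratedSolution_zero_succ, add_sub_cancel_right]

theorem shiftE_sub_smul_one_iteratedSolution_succ (g : ℕ → ℂ) (n : ℕ) :
    (shiftE - lam • (1 : Module.End ℂ (ℕ → ℂ))) (iteratedSolution lam g (n + 1)) =
      iteratedSolution lam g n := by
  funext j
  rw [shiftE_sub_smul_one_apply, iteratedSolution_succ_succ, add_sub_cancel_right]

theorem pow_shiftE_sub_smul_one_iteratedSolution (g : ℕ → ℂ) (n : ℕ) :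
    ((shiftE - lam • (1 : Module.End ℂ (ℕ → ℂ))) ^ (n + 1)) (iteratedSolution lam g n) = g := by
  induction n with
  | zero => rw [pow_one, shiftE_sub_smul_one_iteratedSolution_zero]
  | succ n ih =>
    rw [pow_succ, Module.End.mul_apply, shiftE_sub_smul_one_iteratedSolution_succ, ih]

theorem eq_zero_of_shiftE_sub_smul_one_eq_zero {d : ℕ → ℂ}
    (h : (shiftE - lam • (1 : Module.End ℂ (ℕ → ℂ))) d = 0) (h0 : d 0 = 0) : d = 0 := by
  funext j
  induction j with
  | zero => exact h0
  | succ j ih =>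
    have hj := congrFun h j
    rwa [shiftE_sub_smul_one_apply, Pi.zero_apply, ih, Pi.zero_apply, mul_zero, sub_zero] at hj

theorem eq_zero_of_pow_shiftE_sub_smul_one_eq_zero {β : ℕ} {d : ℕ → ℂ}
    (h : ((shiftE - lam • (1 : Module.End ℂ (ℕ → ℂ))) ^ β) d = 0) (h0 : ∀ j < β, d j = 0) :
    d = 0 := by
  induction β generalizing d with
  | zero => simpa using h
  | succ n ih =>
    rw [pow_succ, Module.End.mul_apply] at h
    refine eq_zero_of_shiftE_sub_smul_one_eq_zero lam (ih h fun j hj => ?_) (h0 0 n.succ_pos)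
    rw [shiftE_sub_smul_one_apply, h0 (j + 1) (by omega), h0 j (by omega), mul_zero, sub_zero]

end ShiftSubSmul

/-- The unique formal power series solution of `(∂_{m,t} − λ)^β û = ĝ` with
`∂^j_{m,t}û(0) = 0` for `j < β` is given, in `u`-coefficients, by
`u_j = Σ_{k=β-1}^{j-1} C(k,β-1) λ^{k-β+1} g_{j-k-1}` (i.e.
`û = Σ_{k≥β-1} C(k,β-1)(∂^{-1}_{m,t})^{k+1} λ^{k-β+1} ĝ`). -/
theorem formal_solution_simple_equation (lam : ℂ) (β : ℕ) (hβ : 1 ≤ β)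
    (g : ℕ → ℂ) (u : ℕ → ℂ) :
    (((shiftE - lam • (1 : Module.End ℂ (ℕ → ℂ))) ^ β) u = g ∧ ∀ j < β, u j = 0) ↔
    u = fun j => ∑ k ∈ Finset.Ico (β - 1) j,
      (k.choose (β - 1) : ℂ) * lam ^ (k + 1 - β) * g (j - k - 1) := by
  obtain ⟨n, rfl⟩ := Nat.exists_eq_add_of_le' hβ
  simp only [Nat.add_sub_cancel, Nat.add_sub_add_right, sum_Ico_eq_iteratedSolution]
  have hsol := pow_shiftE_sub_smul_one_iteratedSolution lam g n
  have hvanish : ∀ j < n + 1, iteratedSolution lam g n j = 0 :=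
    fun j hj => iteratedSolution_eq_zero_of_le lam g (Nat.le_of_lt_succ hj)
  constructor
  · rintro ⟨hu, hu0⟩
    have hdiff : ((shiftE - lam • (1 : Module.End ℂ (ℕ → ℂ))) ^ (n + 1))
        (u - iteratedSolution lam g n) = 0 := by
      rw [map_sub, hu, hsol, sub_self]
    have hdiff0 : ∀ j < n + 1, (u - iteratedSolution lam g n) j = 0 := fun j hj => by
      rw [Pi.sub_apply, hu0 j hj, hvanish j hj, sub_self]
    exact sub_eq_zero.1 (eq_zero_of_pow_shiftE_sub_smul_one_eq_zero lam hdiff hdiff0)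
  · rintro rfl
    exact ⟨hsol, hvanish⟩
end

section
/- Let P(λ,ζ) = P₀(ζ)·∏_{α=1}^{l}(λ − λ_α(ζ))^{n_α} be a polynomial in λ of degree n = n₁+⋯+n_l with polynomial coefficients in ζ, and suppose ĝ is a formal power series with P₀(∂_{m₂,z})ĝ = f̂. Then the Cauchy problem P(∂_{m₁,t},∂_{m₂,z})û = f̂, ∂^j_{m₁,t}û(0,z) = 0 for j = 0,…,n−1, has exactly one formal power series solution û that additionally satisfies ∏_{α=1}^{l}(∂_{m₁,t} − λ_α(∂_{m₂,z}))^{n_α} û = ĝ; i.e., the auxiliary problem ∏(∂_{m₁,t} − λ_α)^{n_α} û = ĝ with the same vanishing initial data has a unique formal solution, and every such solution solves the original problem. -/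
/-!
Under the shift `∂_{m₁,t}` the operator `∏ (∂_{m₁,t} - λ_α)^{n_α}` is the evaluation of the
monic polynomial `∏ (X - C λ_α)^{n_α}` of degree `n = ∑ n_α`, with coefficients in `End V`,
at the shift. For a monic `p` of degree `n`, the `(k + n)`-th coefficient of `p(shift) u` is
`u (k + n)` plus a combination of `u k, …, u (k + n - 1)`, so `p(shift) u = g` together with
`u 0 = ⋯ = u (n - 1) = 0` determines `u` recursively. Any such `u` solves the original problem
because `P₀` acts coefficientwise and `P₀ ĝ = f̂`.
-/

/-- The lift of an operator `T` on the space `V` of formal series in `z` to the space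
`ℕ → V` of formal series in `t` with coefficients in `V`, acting coefficientwise. -/
noncomputable def liftOp (V : Type*) [AddCommGroup V] [Module ℂ V]
    (T : Module.End ℂ V) : Module.End ℂ (ℕ → V) where
  toFun u := fun j => T (u j)
  map_add' u v := by funext j; simp
  map_smul' c u := by funext j; simp

/-- The moment differentiation `∂_{m₁,t}` acting on `u`-coefficient sequences is the
shift `u_j ↦ u_{j+1}`. -/
noncomputable def shiftOp (V : Type*) [AddCommGroup V] [Module ℂ V] :
    Module.End ℂ (ℕ → V) where
  toFun u := fun j => u (j + 1)
  map_add' u v := by funext j; simp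
  map_smul' c u := by funext j; simp

namespace Polynomial

variable {R : Type*} [Semiring R]

theorem monic_list_prod {L : List R[X]} (hL : ∀ q ∈ L, q.Monic) : L.prod.Monic := by
  induction L with
  | nil => exact monic_one
  | cons q L ih =>
    rw [List.forall_mem_cons] at hL
    exact hL.1.mul (ih hL.2)

theorem natDegree_list_prod_of_monic {L : List R[X]} (hL : ∀ q ∈ L, q.Monic) :
    L.prod.natDegree = (L.map natDegree).sum := by
  induction L with
  | nil => exact natDegree_one
  | cons q L ih =>
    rw [List.forall_mem_cons] at hL
    rw [List.prod_cons, List.map_cons, List.sum_cons, hL.1.natDegree_mul (monic_list_prod hL.2),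
      ih hL.2]

end Polynomial

open Polynomial

section ShiftCauchy

variable {V : Type*} [AddCommGroup V] [Module ℂ V]

theorem shiftOp_pow_apply (i : ℕ) (u : ℕ → V) (j : ℕ) :
    (shiftOp V ^ i) u j = u (j + i) := by
  induction i generalizing j with
  | zero => rfl
  | succ i ih =>
    rw [pow_succ', Module.End.mul_apply]
    exact (ih (j + 1)).trans (congrArg u (by omega))

variable (V) in
noncomputable def liftOpRingHom : Module.End ℂ V →+* Module.End ℂ (ℕ → V) where
  toFun := liftOp V
  map_one' := rfl
  map_mul' _ _ := rfl
  map_zero' := rfl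
  map_add' _ _ := rfl

theorem liftOpRingHom_apply (T : Module.End ℂ V) : liftOpRingHom V T = liftOp V T := rfl

theorem commute_liftOpRingHom_shiftOp (T : Module.End ℂ V) :
    Commute (liftOpRingHom V T) (shiftOp V) :=
  LinearMap.ext fun _ => rfl

variable (V) in
noncomputable def evalShift : (Module.End ℂ V)[X] →+* Module.End ℂ (ℕ → V) :=
  eval₂RingHom' (liftOpRingHom V) (shiftOp V) commute_liftOpRingHom_shiftOp

theorem evalShift_X_sub_C (T : Module.End ℂ V) :
    evalShift V (X - C T) = shiftOp V - liftOp V T := by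
  simp [evalShift, liftOpRingHom_apply]

theorem evalShift_apply {p : (Module.End ℂ V)[X]} {N : ℕ} (hN : p.natDegree < N)
    (u : ℕ → V) (j : ℕ) :
    evalShift V p u j = ∑ i ∈ Finset.range N, p.coeff i (u (j + i)) := by
  change eval₂ (liftOpRingHom V) (shiftOp V) p u j = _
  rw [eval₂_eq_sum_range' _ hN, LinearMap.coe_sum, Finset.sum_apply, Finset.sum_apply]
  exact Finset.sum_congr rfl fun i _ => congrArg (p.coeff i) (shiftOp_pow_apply i u j)

theorem evalShift_apply_of_monic {p : (Module.End ℂ V)[X]} (hp : p.Monic) (u : ℕ → V) (k : ℕ) :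
    evalShift V p u k = u (k + p.natDegree)
      + ∑ i ∈ Finset.range p.natDegree, p.coeff i (u (k + i)) := by
  rw [evalShift_apply (Nat.lt_succ_self _), Finset.sum_range_succ, hp.coeff_natDegree, add_comm]
  rfl

noncomputable def cauchySol (p : (Module.End ℂ V)[X]) (g : ℕ → V) : ℕ → V
  | j =>
    if j < p.natDegree then 0
    else g (j - p.natDegree)
      - ∑ i : Fin p.natDegree, p.coeff i (cauchySol p g (j - p.natDegree + i))
  termination_by j => j
  decreasing_by omega

theorem cauchySol_of_lt (p : (Module.End ℂ V)[X]) (g : ℕ → V) {j : ℕ} (hj : j < p.natDegree) :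
    cauchySol p g j = 0 := by
  rw [cauchySol, if_pos hj]

theorem cauchySol_add_natDegree (p : (Module.End ℂ V)[X]) (g : ℕ → V) (k : ℕ) :
    cauchySol p g (k + p.natDegree)
      = g k - ∑ i ∈ Finset.range p.natDegree, p.coeff i (cauchySol p g (k + i)) := by
  rw [cauchySol, if_neg (by omega), Nat.add_sub_cancel,
    Finset.sum_range fun i => p.coeff i (cauchySol p g (k + i))]

theorem existsUnique_evalShift_apply_eq {p : (Module.End ℂ V)[X]} (hp : p.Monic) (g : ℕ → V) :
    ∃! u : ℕ → V, evalShift V p u = g ∧ ∀ j < p.natDegree, u j = 0 := by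
  refine ⟨cauchySol p g, ⟨?_, fun j => cauchySol_of_lt p g⟩, ?_⟩
  · funext k
    rw [evalShift_apply_of_monic hp, cauchySol_add_natDegree, sub_add_cancel]
  · rintro u ⟨hu, hu0⟩
    funext j
    induction j using Nat.strong_induction_on with
    | _ j ih =>
      obtain hj | ⟨k, rfl⟩ : j < p.natDegree ∨ ∃ k, j = k + p.natDegree :=
        (lt_or_ge j p.natDegree).imp_right fun h => ⟨j - p.natDegree, by omega⟩
      · rw [hu0 j hj, cauchySol_of_lt p g hj]
      · have hrec := congrFun hu k
        rw [evalShift_apply_of_monic hp, ← eq_sub_iff_add_eq] at hrec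
        rw [hrec, cauchySol_add_natDegree]
        refine congrArg _ (Finset.sum_congr rfl fun i hi => ?_)
        rw [ih (k + i) (by rw [Finset.mem_range] at hi; omega)]

theorem existsUnique_prod_shiftOp_sub_liftOp_pow {l : ℕ} (Λ : Fin l → Module.End ℂ V)
    (nn : Fin l → ℕ) (g : ℕ → V) :
    ∃! u : ℕ → V,
      (List.ofFn fun α => (shiftOp V - liftOp V (Λ α)) ^ nn α).prod u = g ∧
      ∀ j < ∑ α, nn α, u j = 0 := by
  -- over the zero ring `X - C a = 0`, so degrees can only be computed for nontrivial `V`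
  rcases subsingleton_or_nontrivial V with hV | hV
  · exact ⟨g, ⟨Subsingleton.elim _ _, fun _ _ => Subsingleton.elim _ _⟩,
      fun _ _ => Subsingleton.elim _ _⟩
  set Q : (Module.End ℂ V)[X] := (List.ofFn fun α => (X - C (Λ α)) ^ nn α).prod
  have hmonic : ∀ q ∈ List.ofFn fun α => (X - C (Λ α)) ^ nn α, q.Monic := by
    simp only [List.mem_ofFn]
    rintro q ⟨α, rfl⟩
    exact (monic_X_sub_C (Λ α)).pow _
  have hQ : evalShift V Q
      = (List.ofFn fun α => (shiftOp V - liftOp V (Λ α)) ^ nn α).prod := by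
    simp only [Q, map_list_prod, List.map_ofFn, Function.comp_def, map_pow, evalShift_X_sub_C]
  have hdeg : Q.natDegree = ∑ α, nn α := by
    simp only [Q, natDegree_list_prod_of_monic hmonic, List.map_ofFn, Function.comp_def,
      (monic_X_sub_C _).natDegree_pow, natDegree_X_sub_C, mul_one, List.sum_ofFn]
  rw [← hQ, ← hdeg]
  exact existsUnique_evalShift_apply_eq (monic_list_prod hmonic) g

end ShiftCauchy

theorem factored_cauchy_problem_general (V : Type*) [AddCommGroup V] [Module ℂ V]
    (l : ℕ) (Λ : Fin l → Module.End ℂ V) (nn : Fin l → ℕ)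
    (P₀ : Module.End ℂ V) (f g : ℕ → V) (hg : ∀ j, P₀ (g j) = f j) :
    (∃! u : ℕ → V,
      (List.ofFn fun α => (shiftOp V - liftOp V (Λ α)) ^ nn α).prod u = g ∧
      ∀ j < ∑ α, nn α, u j = 0) ∧
    (∀ u : ℕ → V,
      ((List.ofFn fun α => (shiftOp V - liftOp V (Λ α)) ^ nn α).prod u = g ∧
        ∀ j < ∑ α, nn α, u j = 0) →
      (liftOp V P₀) ((List.ofFn fun α => (shiftOp V - liftOp V (Λ α)) ^ nn α).prod u) = f ∧
      ∀ j < ∑ α, nn α, u j = 0) :=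
  ⟨existsUnique_prod_shiftOp_sub_liftOp_pow Λ nn g,
    fun _ ⟨hu, hu0⟩ => ⟨hu ▸ funext hg, hu0⟩⟩

/-- For `P = P₀·∏(λ−λ_α)^{n_α}` and `ĝ` with `P₀(∂_{m₂,z})ĝ = f̂`: the auxiliary
problem `∏(∂_{m₁,t} − λ_α(∂_{m₂,z}))^{n_α} û = ĝ` with vanishing initial data has a
unique formal solution, and every such solution solves the original Cauchy problem
`P(∂_{m₁,t},∂_{m₂,z})û = f̂` with the same vanishing initial data. -/
theorem factored_cauchy_problem (V : Type*) [AddCommGroup V] [Module ℂ V]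
    (l : ℕ) (Λ : Fin l → Module.End ℂ V) (nn : Fin l → ℕ)
    (hcomm : ∀ α γ : Fin l, Commute (Λ α) (Λ γ))
    (P₀ : Module.End ℂ V) (f g : ℕ → V) (hg : ∀ j, P₀ (g j) = f j) :
    (∃! u : ℕ → V,
      (List.ofFn fun α => (shiftOp V - liftOp V (Λ α)) ^ nn α).prod u = g ∧
      ∀ j < ∑ α, nn α, u j = 0) ∧
    (∀ u : ℕ → V,
      ((List.ofFn fun α => (shiftOp V - liftOp V (Λ α)) ^ nn α).prod u = g ∧
        ∀ j < ∑ α, nn α, u j = 0) →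
      (liftOp V P₀) ((List.ofFn fun α => (shiftOp V - liftOp V (Λ α)) ^ nn α).prod u) = f ∧
      ∀ j < ∑ α, nn α, u j = 0) :=
  factored_cauchy_problem_general V l Λ nn P₀ f g hg
end
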